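/- On R^4 with coordinates (x,y,z,v), the bivector P with components P^{xy} = x²y + y²z, P^{xz} = x²z + yz², P^{xv} = 2xyz + 2yzv, P^{yz} = 0, P^{yv} = y²z + yv², P^{zv} = yz² + zv² (and skew-symmetric extension) is a Poisson bivector: its Schouten bracket [[P,P]] vanishes identically, i.e. the bracket {f,g} = sum P^{ij} ∂_i f ∂_j g satisfies the Jacobi identity. -/

import Mathlib

open scoped BigOperators

/-- Partial derivative `∂_k f` of a scalar function on `ℝ^r`. -/
noncomputable def pd {r : ℕ} (k : Fin r) (f : (Fin r → ℝ) → ℝ) : (Fin r → ℝ) → ℝ :=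
  fun x => fderiv ℝ f x (Pi.single k 1)

/-- Components of the Schouten bracket (Lie derivative) `[[V,P]]` of a vector field `V`
with a bivector `P`. -/
noncomputable def lieD {r : ℕ} (V : Fin r → (Fin r → ℝ) → ℝ)
    (P : Fin r → Fin r → (Fin r → ℝ) → ℝ) (i j : Fin r) (x : Fin r → ℝ) : ℝ :=
  ∑ k, (V k x * pd k (P i j) x - P k j x * pd k (V i) x - P i k x * pd k (V j) x)

/-- The cubic Poisson bivector on `ℝ^4 ≅ gl(2,ℝ)` associated with the `R`-matrix
`((x,y),(z,v)) ↦ ((0,y),(-z,0))`; coordinates `(x,y,z,v) = (w 0, w 1, w 2, w 3)`. -/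
noncomputable def Pa : Fin 4 → Fin 4 → (Fin 4 → ℝ) → ℝ := fun i j w =>
  let x := w 0; let y := w 1; let z := w 2; let v := w 3
  !![0,                          x^2*y + y^2*z,        x^2*z + y*z^2,        2*x*y*z + 2*y*z*v;
     -(x^2*y + y^2*z),           0,                    0,                    y^2*z + y*v^2;
     -(x^2*z + y*z^2),           0,                    0,                    y*z^2 + z*v^2;
     -(2*x*y*z + 2*y*z*v),       -(y^2*z + y*v^2),     -(y*z^2 + z*v^2),     0] i j

/-!
For a skew-symmetric bivector the Jacobiator `J i j k` is cyclic by construction and changes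
sign when `i` and `j` are swapped (taking a partial derivative commutes with negation), so it
is totally antisymmetric and vanishes as soon as it vanishes for `i < j < k`. For `Pa` this
leaves four triples, on which the entries are cubic polynomials: their partial derivatives
follow from the Leibniz rule, and each Jacobiator is a polynomial identity.
-/

section PartialDerivative

variable {r : ℕ} (k : Fin r) {f g : (Fin r → ℝ) → ℝ} {x : Fin r → ℝ}

@[simp]
lemma pd_coord (m : Fin r) :
    pd k (fun w => w m) x = if m = k then 1 else 0 := by
  rw [pd, (hasFDerivAt_apply m x).fderiv]
  simp [Pi.single_apply]

@[simp]
lemma pd_const (c : ℝ) : pd k (fun _ => c) x = 0 := by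
  simp [pd]

@[simp]
lemma pd_neg : pd k (fun w => -f w) x = -pd k f x := by
  simp [pd, fderiv_fun_neg]

lemma pd_add (hf : DifferentiableAt ℝ f x) (hg : DifferentiableAt ℝ g x) :
    pd k (fun w => f w + g w) x = pd k f x + pd k g x := by
  simp [pd, fderiv_fun_add hf hg]

lemma pd_mul (hf : DifferentiableAt ℝ f x) (hg : DifferentiableAt ℝ g x) :
    pd k (fun w => f w * g w) x = pd k f x * g x + f x * pd k g x := by
  simp [pd, fderiv_fun_mul hf hg]
  ring

lemma pd_pow (n : ℕ) (hf : DifferentiableAt ℝ f x) :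
    pd k (fun w => f w ^ n) x = n * f x ^ (n - 1) * pd k f x := by
  simp [pd, fderiv_fun_pow n hf]

end PartialDerivative

lemma eq_zero_of_antisymm_of_lt {ι : Type*} [LinearOrder ι] {J : ι → ι → ι → ℝ}
    (hcycle : ∀ i j k, J j k i = J i j k) (hswap : ∀ i j k, J j i k = -J i j k)
    (hlt : ∀ i j k, i < j → j < k → J i j k = 0) (i j k : ι) : J i j k = 0 := by
  have hswap' : ∀ i j k, J i k j = -J i j k := fun i j k => (hcycle j i k).trans (hswap i j k)
  have hrepeat : ∀ i j, J i i j = 0 := fun i j => by linarith [hswap i i j]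
  have hlt' : ∀ i j k, i < j → J i j k = 0 := by
    intro i j k hij
    rcases lt_trichotomy k i with hki | rfl | hik
    · rw [hcycle k i j]
      exact hlt k i j hki hij
    · rw [hcycle k k j]
      exact hrepeat k j
    rcases lt_trichotomy k j with hkj | rfl | hjk
    · rw [hswap' i k j, neg_eq_zero]
      exact hlt i k j hik hkj
    · linarith [hswap' i k k]
    · exact hlt i j k hij hjk
  rcases lt_trichotomy i j with hij | rfl | hji
  · exact hlt' i j k hij
  · exact hrepeat i k
  · rw [hswap j i k, neg_eq_zero]
    exact hlt' j i k hji

section Jacobiator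

variable {r : ℕ} (P : Fin r → Fin r → (Fin r → ℝ) → ℝ)

noncomputable def jacobiator (i j k : Fin r) (x : Fin r → ℝ) : ℝ :=
  ∑ l, (P l i x * pd l (P j k) x + P l j x * pd l (P k i) x + P l k x * pd l (P i j) x)

lemma jacobiator_cycle (i j k : Fin r) (x : Fin r → ℝ) :
    jacobiator P j k i x = jacobiator P i j k x :=
  Finset.sum_congr rfl fun _ _ => by ring

lemma jacobiator_swap (hP : ∀ i j, P j i = -P i j) (i j k : Fin r) (x : Fin r → ℝ) :
    jacobiator P j i k x = -jacobiator P i j k x := by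
  rw [jacobiator, jacobiator, hP k i, hP j k, hP i j, ← Finset.sum_neg_distrib]
  refine Finset.sum_congr rfl fun l _ => ?_
  simp only [Pi.neg_def, pd_neg]
  ring

lemma jacobiator_eq_zero_of_lt (hP : ∀ i j, P j i = -P i j)
    (hlt : ∀ i j k x, i < j → j < k → jacobiator P i j k x = 0) (i j k : Fin r)
    (x : Fin r → ℝ) : jacobiator P i j k x = 0 :=
  eq_zero_of_antisymm_of_lt (J := fun i j k => jacobiator P i j k x)
    (fun i j k => jacobiator_cycle P i j k x) (fun i j k => jacobiator_swap P hP i j k x)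
    (fun i j k hij hjk => hlt i j k x hij hjk) i j k

end Jacobiator

lemma Pa_skew (i j : Fin 4) : Pa j i = -Pa i j := by
  funext w
  fin_cases i <;> fin_cases j <;> simp [Pa]

lemma jacobiator_Pa_eq_zero_of_lt (i j k : Fin 4) (x : Fin 4 → ℝ) (hij : i < j) (hjk : j < k) :
    jacobiator Pa i j k x = 0 := by
  fin_cases i <;> fin_cases j <;> fin_cases k <;> simp [Fin.lt_def] at hij hjk <;>
  · unfold jacobiator Pa
    simp (disch := fun_prop) [Fin.sum_univ_four, pd_add, pd_mul, pd_pow]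
    ring

/-- the bivector `Pa` is Poisson: its Schouten bracket with itself
(the Jacobiator) vanishes identically. -/
theorem statement6 :
    ∀ (i j k : Fin 4) (x : Fin 4 → ℝ),
      ∑ l, (Pa l i x * pd l (Pa j k) x + Pa l j x * pd l (Pa k i) x
             + Pa l k x * pd l (Pa i j) x) = 0 :=
  jacobiator_eq_zero_of_lt Pa Pa_skew jacobiator_Pa_eq_zero_of_lt
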